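/- arXiv:1108.4365 — 2 statements merged into one kernel-verified Lean document; each statement's English description precedes it below -/
import Mathlib

section
/- The function f(v) = e^v satisfies the fourth-order ODE f''''·f'' = (f''')², and conversely every solution of f''''·f'' = (f''')² with f''' nowhere zero on an interval is of the form f(v) = a·e^{λv} + b·v² + c·v + d for constants a, λ ≠ 0, b, c, d. -/
/-!
With `g = f''` the equation reads `g'' g = g'²`, i.e. `(g'/g)' = 0` (and `g ≠ 0` because `g' ≠ 0`).
Hence `g' = λ g`, so `g = C e^{λv}`, and integrating twice gives
`f = (C/λ²) e^{λv} + c v + d`.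
-/

open Real Set

section
variable {s : Set ℝ}

theorem IsOpen.exists_deriv_eq_const_mul_of_deriv_deriv_mul_eq_sq {g : ℝ → ℝ}
    (hs : IsOpen s) (hs' : IsPreconnected s) (hg : DifferentiableOn ℝ g s)
    (hg' : DifferentiableOn ℝ (deriv g) s) (hg0 : ∀ x ∈ s, g x ≠ 0)
    (hode : ∀ x ∈ s, deriv (deriv g) x * g x = deriv g x ^ 2) :
    ∃ k, ∀ x ∈ s, deriv g x = k * g x := by
  have hratio : s.EqOn (deriv fun x ↦ deriv g x / g x) 0 := fun x hx ↦ by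
    have hxs := hs.mem_nhds hx
    rw [deriv_fun_div ((hg' x hx).differentiableAt hxs) ((hg x hx).differentiableAt hxs)
      (hg0 x hx), ← sq, hode x hx, sub_self, zero_div, Pi.zero_apply]
  obtain ⟨k, hk⟩ := hs.exists_is_const_of_deriv_eq_zero hs' (hg'.div hg hg0) hratio
  exact ⟨k, fun x hx ↦ by rw [← hk x hx, Pi.div_apply, div_mul_cancel₀ _ (hg0 x hx)]⟩

theorem IsOpen.exists_eq_mul_exp_of_deriv_eq_const_mul {u : ℝ → ℝ} {k : ℝ}
    (hs : IsOpen s) (hs' : IsPreconnected s) (hu : DifferentiableOn ℝ u s)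
    (hu' : ∀ x ∈ s, deriv u x = k * u x) :
    ∃ C, ∀ x ∈ s, u x = C * exp (k * x) := by
  have hdiff : DifferentiableOn ℝ (fun x ↦ u x * exp (-k * x)) s :=
    hu.mul (by fun_prop)
  have hzero : s.EqOn (deriv fun x ↦ u x * exp (-k * x)) 0 := fun x hx ↦ by
    rw [deriv_fun_mul ((hu x hx).differentiableAt (hs.mem_nhds hx)) (by fun_prop), hu' x hx,
      (((hasDerivAt_id' x).const_mul (-k)).exp).deriv, Pi.zero_apply]
    ring
  obtain ⟨C, hC⟩ := hs.exists_is_const_of_deriv_eq_zero hs' hdiff hzero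
  refine ⟨C, fun x hx ↦ ?_⟩
  rw [← hC x hx, mul_assoc, ← exp_add]
  simp

theorem IsOpen.exists_eq_add_mul_add_of_deriv_deriv_eq {f h : ℝ → ℝ}
    (hs : IsOpen s) (hs' : IsPreconnected s) (hf : DifferentiableOn ℝ f s)
    (hf' : DifferentiableOn ℝ (deriv f) s) (hh : DifferentiableOn ℝ h s)
    (hh' : DifferentiableOn ℝ (deriv h) s)
    (hfh : s.EqOn (iteratedDeriv 2 f) (iteratedDeriv 2 h)) :
    ∃ c d, ∀ x ∈ s, f x = h x + c * x + d := by
  rw [iteratedDeriv_eq_iterate, iteratedDeriv_eq_iterate] at hfh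
  obtain ⟨c, hc⟩ := hs.exists_eq_add_of_deriv_eq hs' hf' hh' hfh
  have hlin : DifferentiableOn ℝ (fun x ↦ h x + c * x) s := hh.add (by fun_prop)
  obtain ⟨d, hd⟩ := hs.exists_eq_add_of_deriv_eq hs' hf hlin fun x hx ↦ by
    rw [hc hx, deriv_fun_add ((hh x hx).differentiableAt (hs.mem_nhds hx)) (by fun_prop)]
    simp
  exact ⟨c, d, hd⟩

theorem IsOpen.exists_eq_mul_exp_add_of_iteratedDeriv_four_mul_eq_sq {f : ℝ → ℝ}
    (hs : IsOpen s) (hs' : IsPreconnected s) (hne : s.Nonempty) (hf : ContDiff ℝ 4 f)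
    (hode : ∀ x ∈ s, iteratedDeriv 4 f x * iteratedDeriv 2 f x = iteratedDeriv 3 f x ^ 2)
    (h3 : ∀ x ∈ s, iteratedDeriv 3 f x ≠ 0) :
    ∃ a k c d, a ≠ 0 ∧ k ≠ 0 ∧ ∀ x ∈ s, f x = a * exp (k * x) + c * x + d := by
  have hdiff (m : ℕ) (hm : m < 4) : DifferentiableOn ℝ (iteratedDeriv m f) s :=
    (hf.differentiable_iteratedDeriv m (by exact_mod_cast hm)).differentiableOn
  have hg' : deriv (iteratedDeriv 2 f) = iteratedDeriv 3 f := iteratedDeriv_succ.symm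
  have hg'' : deriv (deriv (iteratedDeriv 2 f)) = iteratedDeriv 4 f := by
    rw [hg']
    exact iteratedDeriv_succ.symm
  have hg0 : ∀ x ∈ s, iteratedDeriv 2 f x ≠ 0 := fun x hx h2 ↦
    h3 x hx (pow_eq_zero_iff two_ne_zero |>.mp (by rw [← hode x hx, h2, mul_zero]))
  obtain ⟨k, hk⟩ := hs.exists_deriv_eq_const_mul_of_deriv_deriv_mul_eq_sq hs'
    (hdiff 2 (by norm_num)) (hg' ▸ hdiff 3 (by norm_num)) hg0 (by rwa [hg'', hg'])
  obtain ⟨C, hC⟩ := hs.exists_eq_mul_exp_of_deriv_eq_const_mul hs' (hdiff 2 (by norm_num)) hk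
  obtain ⟨x₀, hx₀⟩ := hne
  have hk0 : k ≠ 0 := by
    rintro rfl
    exact h3 x₀ hx₀ (by rw [← hg', hk x₀ hx₀, zero_mul])
  have hC0 : C ≠ 0 := by
    rintro rfl
    exact hg0 x₀ hx₀ (by rw [hC x₀ hx₀, zero_mul])
  obtain ⟨c, d, hcd⟩ := hs.exists_eq_add_mul_add_of_deriv_deriv_eq hs'
    (h := fun x ↦ C / k ^ 2 * exp (k * x))
    (iteratedDeriv_zero (f := f) ▸ hdiff 0 (by norm_num))
    (iteratedDeriv_one (f := f) ▸ hdiff 1 (by norm_num)) (by fun_prop) (by fun_prop) fun x hx ↦ by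
      rw [hC x hx, iteratedDeriv_const_mul_field, iteratedDeriv_exp_const_mul]
      field_simp
  exact ⟨C / k ^ 2, k, c, d, div_ne_zero hC0 (pow_ne_zero 2 hk0), hk0, hcd⟩

end

/-- The function `f(v) = e^v` satisfies `f''''·f'' = (f''')²`, and conversely every `C⁴`
solution of this ODE on an interval with `f'''` nowhere zero has the form
`f(v) = a·e^{λv} + b·v² + c·v + d` with `a, λ ≠ 0`. -/
theorem stmt0 :
    (∀ v : ℝ, iteratedDeriv 4 Real.exp v * iteratedDeriv 2 Real.exp v
        = (iteratedDeriv 3 Real.exp v) ^ 2) ∧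
    (∀ (f : ℝ → ℝ) (α β : ℝ), α < β → ContDiff ℝ 4 f →
      (∀ v ∈ Ioo α β,
        iteratedDeriv 4 f v * iteratedDeriv 2 f v = (iteratedDeriv 3 f v) ^ 2) →
      (∀ v ∈ Ioo α β, iteratedDeriv 3 f v ≠ 0) →
      ∃ a lam b c d : ℝ, a ≠ 0 ∧ lam ≠ 0 ∧
        ∀ v ∈ Ioo α β, f v = a * Real.exp (lam * v) + b * v ^ 2 + c * v + d) := by
  refine ⟨fun v ↦ by simp only [iteratedDeriv_eq_iterate, iter_deriv_exp, sq], ?_⟩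
  intro f α β hαβ hf hode h3
  obtain ⟨a, k, c, d, ha, hk, hfv⟩ :=
    isOpen_Ioo.exists_eq_mul_exp_add_of_iteratedDeriv_four_mul_eq_sq isPreconnected_Ioo
      (nonempty_Ioo.2 hαβ) hf hode h3
  exact ⟨a, k, 0, c, d, ha, hk, fun v hv ↦ by rw [hfv v hv]; ring⟩
end

section
/- Let p, q : ℝ² → ℝ be smooth and suppose a smooth function h : ℝ² → ℝ satisfies h_{www} = q, h_{vww} = p·q, h_{vvw} = p²·q, h_{vvv} = p³·q everywhere with q nowhere zero. Then p satisfies p_v = p·p_w and q satisfies q_v = (p·q)_w. -/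
/-- Partial derivative in the first variable. -/
noncomputable def pv (h : ℝ → ℝ → ℝ) : ℝ → ℝ → ℝ := fun v w => deriv (fun x => h x w) v
/-- Partial derivative in the second variable. -/
noncomputable def pw (h : ℝ → ℝ → ℝ) : ℝ → ℝ → ℝ := fun v w => deriv (fun y => h v y) w

open Function

lemma hasDeriv_fst {f : ℝ → ℝ → ℝ} (hf : Differentiable ℝ (uncurry f)) (v w : ℝ) :
    HasDerivAt (fun x => f x w) (fderiv ℝ (uncurry f) (v, w) (1, 0)) v := by
  have h1 : HasFDerivAt (uncurry f) (fderiv ℝ (uncurry f) (v, w)) (v, w) :=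
    (hf (v, w)).hasFDerivAt
  have h2 : HasFDerivAt (fun x : ℝ => (x, w))
      ((ContinuousLinearMap.id ℝ ℝ).prod 0) v :=
    (hasFDerivAt_id v).prodMk (hasFDerivAt_const w v)
  have h3 := (h1.comp v h2).hasDerivAt
  exact h3

lemma hasDeriv_snd {f : ℝ → ℝ → ℝ} (hf : Differentiable ℝ (uncurry f)) (v w : ℝ) :
    HasDerivAt (fun y => f v y) (fderiv ℝ (uncurry f) (v, w) (0, 1)) w := by
  have h1 : HasFDerivAt (uncurry f) (fderiv ℝ (uncurry f) (v, w)) (v, w) :=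
    (hf (v, w)).hasFDerivAt
  have h2 : HasFDerivAt (fun y : ℝ => (v, y))
      ((0 : ℝ →L[ℝ] ℝ).prod (ContinuousLinearMap.id ℝ ℝ)) w :=
    (hasFDerivAt_const v w).prodMk (hasFDerivAt_id w)
  have h3 := (h1.comp w h2).hasDerivAt
  exact h3

lemma pv_eq {f : ℝ → ℝ → ℝ} (hf : ContDiff ℝ (⊤ : ℕ∞) (uncurry f)) (v w : ℝ) :
    pv f v w = fderiv ℝ (uncurry f) (v, w) (1, 0) :=
  (hasDeriv_fst (hf.differentiable (by simp)) v w).deriv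

lemma pw_eq {f : ℝ → ℝ → ℝ} (hf : ContDiff ℝ (⊤ : ℕ∞) (uncurry f)) (v w : ℝ) :
    pw f v w = fderiv ℝ (uncurry f) (v, w) (0, 1) :=
  (hasDeriv_snd (hf.differentiable (by simp)) v w).deriv

lemma contDiff_eval {f : ℝ → ℝ → ℝ} (hf : ContDiff ℝ (⊤ : ℕ∞) (uncurry f)) (c : ℝ × ℝ) :
    ContDiff ℝ (⊤ : ℕ∞) (fun z : ℝ × ℝ => fderiv ℝ (uncurry f) z c) :=
  (hf.fderiv_right (by simp)).clm_apply contDiff_const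

lemma contDiff_pv {f : ℝ → ℝ → ℝ} (hf : ContDiff ℝ (⊤ : ℕ∞) (uncurry f)) :
    ContDiff ℝ (⊤ : ℕ∞) (uncurry (pv f)) := by
  have he : uncurry (pv f) = fun z : ℝ × ℝ => fderiv ℝ (uncurry f) z (1, 0) := by
    funext z
    exact pv_eq hf z.1 z.2
  rw [he]
  exact contDiff_eval hf _

lemma contDiff_pw {f : ℝ → ℝ → ℝ} (hf : ContDiff ℝ (⊤ : ℕ∞) (uncurry f)) :
    ContDiff ℝ (⊤ : ℕ∞) (uncurry (pw f)) := by
  have he : uncurry (pw f) = fun z : ℝ × ℝ => fderiv ℝ (uncurry f) z (0, 1) := by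
    funext z
    exact pw_eq hf z.1 z.2
  rw [he]
  exact contDiff_eval hf _

lemma second_eval {f : ℝ → ℝ → ℝ} (hf : ContDiff ℝ (⊤ : ℕ∞) (uncurry f)) (z a b : ℝ × ℝ) :
    fderiv ℝ (fun y : ℝ × ℝ => fderiv ℝ (uncurry f) y b) z a
      = fderiv ℝ (fderiv ℝ (uncurry f)) z a b := by
  have hd : DifferentiableAt ℝ (fderiv ℝ (uncurry f)) z :=
    ((hf.fderiv_right (m := (⊤ : ℕ∞)) (by simp)).differentiable (by simp)) z
  have h := (hd.hasFDerivAt.clm_apply (hasFDerivAt_const b z)).fderiv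
  rw [h]
  simp

/-- Clairaut's theorem for our curried partial derivatives. -/
lemma clairaut {f : ℝ → ℝ → ℝ} (hf : ContDiff ℝ (⊤ : ℕ∞) (uncurry f)) (v w : ℝ) :
    pv (pw f) v w = pw (pv f) v w := by
  have hpw := contDiff_pw hf
  have hpv := contDiff_pv hf
  have epw : uncurry (pw f) = fun z : ℝ × ℝ => fderiv ℝ (uncurry f) z (0, 1) := by
    funext z; exact pw_eq hf z.1 z.2
  have epv : uncurry (pv f) = fun z : ℝ × ℝ => fderiv ℝ (uncurry f) z (1, 0) := by
    funext z; exact pv_eq hf z.1 z.2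
  have h1 : pv (pw f) v w = fderiv ℝ (fderiv ℝ (uncurry f)) (v, w) (1, 0) (0, 1) := by
    rw [pv_eq hpw v w, epw, second_eval hf]
  have h2 : pw (pv f) v w = fderiv ℝ (fderiv ℝ (uncurry f)) (v, w) (0, 1) (1, 0) := by
    rw [pw_eq hpv v w, epv, second_eval hf]
  rw [h1, h2]
  exact second_derivative_symmetric
    (fun y => ((hf.differentiable (by simp)) y).hasFDerivAt)
    (((hf.fderiv_right (m := (⊤ : ℕ∞)) (by simp)).differentiable (by simp)) (v, w)).hasFDerivAt _ _

lemma hasDerivAt_pv {f : ℝ → ℝ → ℝ} (hf : ContDiff ℝ (⊤ : ℕ∞) (uncurry f)) (v w : ℝ) :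
    HasDerivAt (fun x => f x w) (pv f v w) v := by
  rw [pv_eq hf v w]
  exact hasDeriv_fst (hf.differentiable (by simp)) v w

lemma hasDerivAt_pw {f : ℝ → ℝ → ℝ} (hf : ContDiff ℝ (⊤ : ℕ∞) (uncurry f)) (v w : ℝ) :
    HasDerivAt (fun y => f v y) (pw f v w) w := by
  rw [pw_eq hf v w]
  exact hasDeriv_snd (hf.differentiable (by simp)) v w

/-- Compatibility conditions for the parametrization `h_www = q`, `h_vww = pq`,
`h_vvw = p²q`, `h_vvv = p³q`: one gets `p_v = p p_w` and `q_v = (pq)_w`. -/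
theorem stmt5 (h p q : ℝ → ℝ → ℝ)
    (hh : ContDiff ℝ (⊤ : ℕ∞) (Function.uncurry h))
    (hp : ContDiff ℝ (⊤ : ℕ∞) (Function.uncurry p))
    (hq : ContDiff ℝ (⊤ : ℕ∞) (Function.uncurry q))
    (hqz : ∀ v w, q v w ≠ 0)
    (e1 : ∀ v w, pw (pw (pw h)) v w = q v w)
    (e2 : ∀ v w, pv (pw (pw h)) v w = p v w * q v w)
    (e3 : ∀ v w, pv (pv (pw h)) v w = (p v w) ^ 2 * q v w)
    (e4 : ∀ v w, pv (pv (pv h)) v w = (p v w) ^ 3 * q v w) :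
    (∀ v w, pv p v w = p v w * pw p v w) ∧
    (∀ v w, pv q v w = pw (fun v w => p v w * q v w) v w) := by
  -- smoothness of iterated derivatives of h
  have hw : ContDiff ℝ (⊤ : ℕ∞) (Function.uncurry (pw h)) := contDiff_pw hh
  have hww : ContDiff ℝ (⊤ : ℕ∞) (Function.uncurry (pw (pw h))) := contDiff_pw hw
  -- conclusion (ii)
  have hQfun : q = pw (pw (pw h)) := funext fun v => funext fun w => (e1 v w).symm
  have hPQfun : pv (pw (pw h)) = fun v w => p v w * q v w :=
    funext fun v => funext fun w => e2 v w
  have key2 : ∀ v w, pv q v w = pw (fun v w => p v w * q v w) v w := by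
    intro v w
    calc pv q v w = pv (pw (pw (pw h))) v w := by rw [hQfun]
      _ = pw (pv (pw (pw h))) v w := clairaut hww v w
      _ = pw (fun v w => p v w * q v w) v w := by rw [hPQfun]
  refine ⟨?_, key2⟩
  -- conclusion (i)
  have hPwg : pw (pv (pw h)) = fun v w => p v w * q v w := by
    funext v w
    rw [← clairaut hw v w]
    exact e2 v w
  have hPvg : pv (pv (pw h)) = fun v w => p v w ^ 2 * q v w :=
    funext fun v => funext fun w => e3 v w
  intro v w
  -- Clairaut on g := pv (pw h)
  have hg : ContDiff ℝ (⊤ : ℕ∞) (Function.uncurry (pv (pw h))) := contDiff_pv hw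
  have hc : pv (fun v w => p v w * q v w) v w = pw (fun v w => p v w ^ 2 * q v w) v w := by
    rw [← hPwg, ← hPvg]
    exact clairaut hg v w
  -- expand derivatives via product rules
  have hPv : HasDerivAt (fun x => p x w) (pv p v w) v := hasDerivAt_pv hp v w
  have hQv : HasDerivAt (fun x => q x w) (pv q v w) v := hasDerivAt_pv hq v w
  have hPw : HasDerivAt (fun y => p v y) (pw p v w) w := hasDerivAt_pw hp v w
  have hQw : HasDerivAt (fun y => q v y) (pw q v w) w := hasDerivAt_pw hq v w
  have eL : pv (fun v w => p v w * q v w) v w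
      = pv p v w * q v w + p v w * pv q v w := (hPv.mul hQv).deriv
  have eR : pw (fun v w => p v w ^ 2 * q v w) v w
      = ((2 : ℕ) * p v w ^ 1 * pw p v w) * q v w + p v w ^ 2 * pw q v w :=
    ((hPw.pow 2).mul hQw).deriv
  have ePQw : pw (fun v w => p v w * q v w) v w
      = pw p v w * q v w + p v w * pw q v w := (hPw.mul hQw).deriv
  have hq2 := key2 v w
  rw [ePQw] at hq2
  rw [eL, eR, hq2] at hc
  have hz : (pv p v w - p v w * pw p v w) * q v w = 0 := by
    push_cast at hc
    ring_nf at hc ⊢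
    linarith
  rcases mul_eq_zero.1 hz with h0 | h0
  · linarith
  · exact absurd h0 (hqz v w)
end
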